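/- arXiv:2111.14626 — 2 statements merged into one kernel-verified Lean document; each statement's English description precedes it below -/
import Mathlib

section
/- Let H = [[A, B], [B*, C]] ∈ M_2(M_n) be positive semidefinite, where A, B, C ∈ M_n. Then the 2×2 block matrix K = [[(tr A)·I_n + C, (tr B)·I_n − B], [(tr B*)·I_n − B*, (tr C)·I_n + A]] is PPT, i.e., both K and its partial transpose K^τ = [[(tr A)·I_n + C, (tr B*)·I_n − B*], [(tr B)·I_n − B, (tr C)·I_n + A]] are positive semidefinite. -/
open Matrix
open scoped ComplexOrder InnerProductSpace

noncomputable section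

namespace Stmt17Aux

variable {ι : Type*} [Fintype ι]

/-- Hermitian inner-product style pairing on `ι → ℂ`. -/
def inn (a b : ι → ℂ) : ℂ := ∑ i, (starRingEnd ℂ) (a i) * b i

/-- Squared norm. -/
def N (a : ι → ℂ) : ℝ := ∑ i, Complex.normSq (a i)

lemma N_nonneg (a : ι → ℂ) : 0 ≤ N a :=
  Finset.sum_nonneg fun _ _ => Complex.normSq_nonneg _

lemma inn_conj (a b : ι → ℂ) : (starRingEnd ℂ) (inn a b) = inn b a := by
  simp [inn, map_sum, mul_comm]

lemma inn_self (a : ι → ℂ) : inn a a = (N a : ℂ) := by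
  simp [inn, N, Complex.normSq_eq_conj_mul_self]

/-- Cauchy–Schwarz for `inn`. -/
lemma inn_cs (a b : ι → ℂ) : ‖inn a b‖ ≤ Real.sqrt (N a) * Real.sqrt (N b) := by
  set a' : EuclideanSpace ℂ ι := (WithLp.equiv 2 (ι → ℂ)).symm a with ha'
  set b' : EuclideanSpace ℂ ι := (WithLp.equiv 2 (ι → ℂ)).symm b with hb'
  have h := norm_inner_le_norm (𝕜 := ℂ) a' b'
  have h1 : ⟪a', b'⟫_ℂ = inn a b := by
    simp [PiLp.inner_apply, inn, RCLike.inner_apply, ha', hb']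
    exact Finset.sum_congr rfl fun i _ => mul_comm _ _
  have h2 : ∀ c : ι → ℂ, ‖(WithLp.equiv 2 (ι → ℂ)).symm c‖ = Real.sqrt (N c) := by
    intro c
    rw [EuclideanSpace.norm_eq, N]
    congr 1
    exact Finset.sum_congr rfl fun i _ => by rw [← Complex.sq_norm]; norm_num
  rw [h1, ha', hb', h2, h2] at h
  exact h

/-- The wedge (antisymmetrized tensor) of two vectors. -/
def wedge (a b : ι → ℂ) : ι × ι → ℂ := fun p => a p.1 * b p.2 - b p.1 * a p.2

lemma inn_factor (a b c d : ι → ℂ) :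
    inn a c * inn b d = ∑ i, ∑ j, ((starRingEnd ℂ) (a i) * c i) * ((starRingEnd ℂ) (b j) * d j) :=
  Finset.sum_mul_sum _ _ _ _

lemma inn_wedge (a b c d : ι → ℂ) :
    inn (wedge a b) (wedge c d) = 2 * (inn a c * inn b d - inn a d * inn b c) := by
  calc inn (wedge a b) (wedge c d)
      = ∑ i, ∑ j,
        (((starRingEnd ℂ) (a i) * c i) * ((starRingEnd ℂ) (b j) * d j)
        - ((starRingEnd ℂ) (a i) * d i) * ((starRingEnd ℂ) (b j) * c j)
        - ((starRingEnd ℂ) (b i) * c i) * ((starRingEnd ℂ) (a j) * d j)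
        + ((starRingEnd ℂ) (b i) * d i) * ((starRingEnd ℂ) (a j) * c j)) := by
        rw [inn, Fintype.sum_prod_type]
        refine Finset.sum_congr rfl fun i _ => Finset.sum_congr rfl fun j _ => ?_
        show (starRingEnd ℂ) (a i * b j - b i * a j) * (c i * d j - d i * c j) = _
        simp only [map_sub, _root_.map_mul]
        ring
    _ = inn a c * inn b d - inn a d * inn b c - inn b c * inn a d + inn b d * inn a c := by
        simp only [Finset.sum_add_distrib, Finset.sum_sub_distrib]
        rw [← inn_factor a b c d, ← inn_factor a b d c, ← inn_factor b a c d, ← inn_factor b a d c]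
    _ = 2 * (inn a c * inn b d - inn a d * inn b c) := by ring

lemma N_wedge (a b : ι → ℂ) : N (wedge a b) ≤ 2 * (N a * N b) := by
  have h : (N (wedge a b) : ℂ) = 2 * ((N a : ℂ) * (N b : ℂ) - inn a b * inn b a) := by
    rw [← inn_self, inn_wedge, inn_self, inn_self]
  have h2 : inn a b * inn b a = (Complex.normSq (inn b a) : ℂ) := by
    rw [← inn_conj b a, Complex.normSq_eq_conj_mul_self]
  rw [h2] at h
  have := congrArg Complex.re h
  push_cast at this
  simp at this
  nlinarith [Complex.normSq_nonneg (inn b a)]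

/-- Wedge Cauchy–Schwarz bound on the determinant-like cross term. -/
lemma lam_bound (p q x y : ι → ℂ) :
    2 * ‖inn q p * inn x y - inn x p * inn q y‖ ≤ N p * N x + N q * N y := by
  have h1 : ‖inn (wedge q x) (wedge p y)‖ ≤ Real.sqrt (N (wedge q x)) * Real.sqrt (N (wedge p y)) :=
    inn_cs _ _
  rw [inn_wedge] at h1
  have e : inn q p * inn x y - inn q y * inn x p = inn q p * inn x y - inn x p * inn q y := by ring
  rw [e, norm_mul] at h1
  simp only [Complex.norm_ofNat] at h1
  have b1 : Real.sqrt (N (wedge q x)) ≤ Real.sqrt (2 * (N q * N x)) :=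
    Real.sqrt_le_sqrt (N_wedge q x)
  have b2 : Real.sqrt (N (wedge p y)) ≤ Real.sqrt (2 * (N p * N y)) :=
    Real.sqrt_le_sqrt (N_wedge p y)
  have hs1 : Real.sqrt (2 * (N q * N x)) = Real.sqrt 2 * (Real.sqrt (N q) * Real.sqrt (N x)) := by
    rw [Real.sqrt_mul (by norm_num), Real.sqrt_mul (N_nonneg q)]
  have hs2 : Real.sqrt (2 * (N p * N y)) = Real.sqrt 2 * (Real.sqrt (N p) * Real.sqrt (N y)) := by
    rw [Real.sqrt_mul (by norm_num), Real.sqrt_mul (N_nonneg p)]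
  have key : 2 * ‖inn q p * inn x y - inn x p * inn q y‖ ≤
      2 * (Real.sqrt (N q) * Real.sqrt (N x) * (Real.sqrt (N p) * Real.sqrt (N y))) := by
    have hmul : Real.sqrt (N (wedge q x)) * Real.sqrt (N (wedge p y)) ≤
        (Real.sqrt 2 * (Real.sqrt (N q) * Real.sqrt (N x))) *
        (Real.sqrt 2 * (Real.sqrt (N p) * Real.sqrt (N y))) := by
      rw [← hs1, ← hs2]
      exact mul_le_mul b1 b2 (Real.sqrt_nonneg _) (Real.sqrt_nonneg _)
    have h2 : Real.sqrt 2 * Real.sqrt 2 = 2 := Real.mul_self_sqrt (by norm_num)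
    nlinarith [h1, hmul, norm_nonneg (inn q p * inn x y - inn x p * inn q y)]
  refine key.trans ?_
  have amgm : 2 * (Real.sqrt (N p) * Real.sqrt (N x) * (Real.sqrt (N q) * Real.sqrt (N y))) ≤
      (Real.sqrt (N p) * Real.sqrt (N x))^2 + (Real.sqrt (N q) * Real.sqrt (N y))^2 := by
    nlinarith [sq_nonneg (Real.sqrt (N p) * Real.sqrt (N x) - Real.sqrt (N q) * Real.sqrt (N y))]
  have e2 : (Real.sqrt (N p) * Real.sqrt (N x))^2 = N p * N x := by
    rw [mul_pow, Real.sq_sqrt (N_nonneg p), Real.sq_sqrt (N_nonneg x)]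
  have e3 : (Real.sqrt (N q) * Real.sqrt (N y))^2 = N q * N y := by
    rw [mul_pow, Real.sq_sqrt (N_nonneg q), Real.sq_sqrt (N_nonneg y)]
  calc 2 * (Real.sqrt (N q) * Real.sqrt (N x) * (Real.sqrt (N p) * Real.sqrt (N y)))
      = 2 * (Real.sqrt (N p) * Real.sqrt (N x) * (Real.sqrt (N q) * Real.sqrt (N y))) := by ring
    _ ≤ N p * N x + N q * N y := by rw [← e2, ← e3]; exact amgm

/-- Product Cauchy–Schwarz bound. -/
lemma mu_bound (p q x y : ι → ℂ) :
    2 * ‖inn p q * inn x y‖ ≤ N p * N x + N q * N y := by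
  rw [norm_mul]
  have c1 := inn_cs p q
  have c2 := inn_cs x y
  have e2 : (Real.sqrt (N p) * Real.sqrt (N x))^2 = N p * N x := by
    rw [mul_pow, Real.sq_sqrt (N_nonneg p), Real.sq_sqrt (N_nonneg x)]
  have e3 : (Real.sqrt (N q) * Real.sqrt (N y))^2 = N q * N y := by
    rw [mul_pow, Real.sq_sqrt (N_nonneg q), Real.sq_sqrt (N_nonneg y)]
  nlinarith [sq_nonneg (Real.sqrt (N p) * Real.sqrt (N x) - Real.sqrt (N q) * Real.sqrt (N y)),
    norm_nonneg (inn p q), norm_nonneg (inn x y),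
    Real.sqrt_nonneg (N p), Real.sqrt_nonneg (N q), Real.sqrt_nonneg (N x), Real.sqrt_nonneg (N y),
    mul_le_mul c1 c2 (norm_nonneg _) (mul_nonneg (Real.sqrt_nonneg _) (Real.sqrt_nonneg _))]

/-- Per-Gram-vector quadratic form of the block matrix `K`. -/
def fK (p q x y : ι → ℂ) : ℂ :=
  inn p p * inn x x + inn x q * inn q x + inn q p * inn x y - inn x p * inn q y
  + inn p q * inn y x - inn y q * inn p x + inn q q * inn y y + inn y p * inn p y

/-- Per-Gram-vector quadratic form of the partial transpose `Kᵀ`. -/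
def gK (p q x y : ι → ℂ) : ℂ :=
  inn p p * inn x x + inn x q * inn q x + inn p q * inn x y - inn x q * inn p y
  + inn q p * inn y x - inn y p * inn q x + inn q q * inn y y + inn y p * inn p y

lemma fK_nonneg (p q x y : ι → ℂ) : 0 ≤ fK p q x y := by
  have c1 : inn x q * inn q x = (Complex.normSq (inn q x) : ℂ) := by
    rw [← inn_conj q x, Complex.normSq_eq_conj_mul_self]
  have c2 : inn y p * inn p y = (Complex.normSq (inn p y) : ℂ) := by
    rw [← inn_conj p y, Complex.normSq_eq_conj_mul_self]
  have step : fK p q x y = (N p : ℂ) * (N x : ℂ) + (N q : ℂ) * (N y : ℂ)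
      + (Complex.normSq (inn q x) : ℂ) + (Complex.normSq (inn p y) : ℂ)
      + ((inn q p * inn x y - inn x p * inn q y)
        + (starRingEnd ℂ) (inn q p * inn x y - inn x p * inn q y)) := by
    rw [fK, ← inn_self p, ← inn_self x, ← inn_self q, ← inn_self y, ← c1, ← c2]
    simp only [map_sub, _root_.map_mul, inn_conj]
    ring
  set lam := inn q p * inn x y - inn x p * inn q y with hlam
  have hz : fK p q x y = ((N p * N x + N q * N y + Complex.normSq (inn q x)
      + Complex.normSq (inn p y) + 2 * lam.re : ℝ) : ℂ) := by
    rw [step, Complex.add_conj]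
    push_cast
    ring
  rw [hz]
  have hre : 0 ≤ N p * N x + N q * N y + Complex.normSq (inn q x)
      + Complex.normSq (inn p y) + 2 * lam.re := by
    have hb := lam_bound p q x y
    have h1 : |lam.re| ≤ ‖lam‖ := Complex.abs_re_le_norm lam
    have h2 := neg_abs_le lam.re
    nlinarith [Complex.normSq_nonneg (inn q x), Complex.normSq_nonneg (inn p y)]
  exact_mod_cast Complex.zero_le_real.mpr hre

lemma gK_nonneg (p q x y : ι → ℂ) : 0 ≤ gK p q x y := by
  have c1 : inn x q * inn q x - inn x q * inn p y - inn y p * inn q x + inn y p * inn p y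
      = (Complex.normSq (inn q x - inn p y) : ℂ) := by
    rw [Complex.normSq_eq_conj_mul_self, map_sub, ← inn_conj q x, ← inn_conj p y]
    ring
  have step : gK p q x y = (N p : ℂ) * (N x : ℂ) + (N q : ℂ) * (N y : ℂ)
      + (Complex.normSq (inn q x - inn p y) : ℂ)
      + ((inn p q * inn x y) + (starRingEnd ℂ) (inn p q * inn x y)) := by
    rw [gK, ← inn_self p, ← inn_self x, ← inn_self q, ← inn_self y, ← c1]
    simp only [_root_.map_mul, inn_conj]
    ring
  set mu := inn p q * inn x y with hmu
  have hz : gK p q x y = ((N p * N x + N q * N y + Complex.normSq (inn q x - inn p y)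
      + 2 * mu.re : ℝ) : ℂ) := by
    rw [step, Complex.add_conj]
    push_cast
    ring
  rw [hz]
  have hre : 0 ≤ N p * N x + N q * N y + Complex.normSq (inn q x - inn p y) + 2 * mu.re := by
    have hb := mu_bound p q x y
    have h1 : |mu.re| ≤ ‖mu‖ := Complex.abs_re_le_norm mu
    have h2 := neg_abs_le mu.re
    nlinarith [Complex.normSq_nonneg (inn q x - inn p y)]
  exact_mod_cast Complex.zero_le_real.mpr hre

lemma quad_rep {m : Type*} [Fintype m] (M : Matrix ι ι ℂ) (a b : m → ι → ℂ)
    (hM : ∀ i j, M i j = ∑ r, a r i * (starRingEnd ℂ) (b r j)) (x y : ι → ℂ) :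
    star x ⬝ᵥ (M *ᵥ y) = ∑ r, inn x (a r) * inn (b r) y := by
  have hR : ∀ r : m, inn x (a r) * inn (b r) y
      = ∑ i, ∑ j, ((starRingEnd ℂ) (x i) * a r i) * ((starRingEnd ℂ) (b r j) * y j) :=
    fun r => Finset.sum_mul_sum _ _ _ _
  calc star x ⬝ᵥ (M *ᵥ y)
      = ∑ i, ∑ j, ∑ r, (starRingEnd ℂ) (x i) * ((a r i * (starRingEnd ℂ) (b r j)) * y j) := by
        simp only [dotProduct, mulVec, Pi.star_apply, RCLike.star_def, hM,
          Finset.sum_mul, Finset.mul_sum]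
    _ = ∑ i, ∑ r, ∑ j, (starRingEnd ℂ) (x i) * ((a r i * (starRingEnd ℂ) (b r j)) * y j) :=
        Finset.sum_congr rfl fun i _ => Finset.sum_comm
    _ = ∑ r, ∑ i, ∑ j, (starRingEnd ℂ) (x i) * ((a r i * (starRingEnd ℂ) (b r j)) * y j) :=
        Finset.sum_comm
    _ = ∑ r, inn x (a r) * inn (b r) y := by
        refine Finset.sum_congr rfl fun r _ => ?_
        rw [hR r]
        exact Finset.sum_congr rfl fun i _ => Finset.sum_congr rfl fun j _ => by ring

lemma trace_rep {m : Type*} [Fintype m] (M : Matrix ι ι ℂ) (a b : m → ι → ℂ)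
    (hM : ∀ i j, M i j = ∑ r, a r i * (starRingEnd ℂ) (b r j)) :
    M.trace = ∑ r, inn (b r) (a r) := by
  calc M.trace = ∑ i, ∑ r, a r i * (starRingEnd ℂ) (b r i) := by
        rw [Matrix.trace]
        exact Finset.sum_congr rfl fun i _ => by rw [Matrix.diag_apply, hM]
    _ = ∑ r, ∑ i, a r i * (starRingEnd ℂ) (b r i) := Finset.sum_comm
    _ = ∑ r, inn (b r) (a r) :=
        Finset.sum_congr rfl fun r _ => Finset.sum_congr rfl fun i _ => by ring

lemma quad_blocks (M11 M12 M21 M22 : Matrix ι ι ℂ) (x y : ι → ℂ) :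
    star (Sum.elim x y) ⬝ᵥ ((fromBlocks M11 M12 M21 M22) *ᵥ Sum.elim x y) =
      star x ⬝ᵥ (M11 *ᵥ x) + star x ⬝ᵥ (M12 *ᵥ y)
      + (star y ⬝ᵥ (M21 *ᵥ x) + star y ⬝ᵥ (M22 *ᵥ y)) := by
  rw [Matrix.fromBlocks_mulVec]
  have hs : star (Sum.elim x y) = Sum.elim (star x) (star y) := by
    funext r; cases r <;> rfl
  rw [hs, sumElim_dotProduct_sumElim, dotProduct_add, dotProduct_add,
    Sum.elim_comp_inl, Sum.elim_comp_inr]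

lemma inn_eq_dot (x y : ι → ℂ) : star x ⬝ᵥ y = inn x y := rfl

end Stmt17Aux

open Stmt17Aux

/-- If `[[A, B], [B*, C]] ∈ M₂(M_n)` is positive semidefinite, then the block
matrix `[[ (tr A)I + C, (tr B)I − B ], [ (tr B*)I − B*, (tr C)I + A ]]` is PPT:
both it and its partial transpose are positive semidefinite. -/
theorem stmt17 {n : ℕ} (A B C : Matrix (Fin n) (Fin n) ℂ)
    (h : (Matrix.fromBlocks A B Bᴴ C).PosSemidef) :
    (Matrix.fromBlocks
        (A.trace • (1 : Matrix (Fin n) (Fin n) ℂ) + C)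
        (B.trace • (1 : Matrix (Fin n) (Fin n) ℂ) - B)
        (Bᴴ.trace • (1 : Matrix (Fin n) (Fin n) ℂ) - Bᴴ)
        (C.trace • (1 : Matrix (Fin n) (Fin n) ℂ) + A)).PosSemidef
    ∧ (Matrix.fromBlocks
        (A.trace • (1 : Matrix (Fin n) (Fin n) ℂ) + C)
        (Bᴴ.trace • (1 : Matrix (Fin n) (Fin n) ℂ) - Bᴴ)
        (B.trace • (1 : Matrix (Fin n) (Fin n) ℂ) - B)
        (C.trace • (1 : Matrix (Fin n) (Fin n) ℂ) + A)).PosSemidef := by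
  classical
  obtain ⟨S, hS⟩ : ∃ S : Matrix (Fin n ⊕ Fin n) (Fin n ⊕ Fin n) ℂ,
      Matrix.fromBlocks A B Bᴴ C = Sᴴ * S := by
    open scoped MatrixOrder Matrix.Norms.L2Operator in
    exact CStarAlgebra.nonneg_iff_eq_star_mul_self.mp h.nonneg
  set p : (Fin n ⊕ Fin n) → Fin n → ℂ := fun r i => (starRingEnd ℂ) (S r (Sum.inl i)) with hp
  set q : (Fin n ⊕ Fin n) → Fin n → ℂ := fun r i => (starRingEnd ℂ) (S r (Sum.inr i)) with hq
  have entry : ∀ i j, (Matrix.fromBlocks A B Bᴴ C) i j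
      = ∑ r, (starRingEnd ℂ) (S r i) * S r j := by
    intro i j
    rw [hS, Matrix.mul_apply]
    simp [Matrix.conjTranspose_apply]
  have hA : ∀ i j, A i j = ∑ r, p r i * (starRingEnd ℂ) (p r j) := by
    intro i j
    have := entry (Sum.inl i) (Sum.inl j)
    simpa [hp, Matrix.fromBlocks_apply₁₁] using this
  have hB : ∀ i j, B i j = ∑ r, p r i * (starRingEnd ℂ) (q r j) := by
    intro i j
    have := entry (Sum.inl i) (Sum.inr j)
    simpa [hp, hq, Matrix.fromBlocks_apply₁₂] using this
  have hBH : ∀ i j, Bᴴ i j = ∑ r, q r i * (starRingEnd ℂ) (p r j) := by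
    intro i j
    have := entry (Sum.inr i) (Sum.inl j)
    simpa [hp, hq, Matrix.fromBlocks_apply₂₁] using this
  have hC : ∀ i j, C i j = ∑ r, q r i * (starRingEnd ℂ) (q r j) := by
    intro i j
    have := entry (Sum.inr i) (Sum.inr j)
    simpa [hq, Matrix.fromBlocks_apply₂₂] using this
  have tA : A.trace = ∑ r, inn (p r) (p r) := trace_rep _ _ _ hA
  have tB : B.trace = ∑ r, inn (q r) (p r) := trace_rep _ _ _ hB
  have tBH : Bᴴ.trace = ∑ r, inn (p r) (q r) := trace_rep _ _ _ hBH
  have tC : C.trace = ∑ r, inn (q r) (q r) := trace_rep _ _ _ hC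
  -- Hermitian facts
  obtain ⟨hAH, -, hBHH, hCH⟩ := Matrix.isHermitian_fromBlocks_iff.mp h.1
  have hTrB : star B.trace = Bᴴ.trace := (Matrix.trace_conjTranspose B).symm
  have hTrBH : star Bᴴ.trace = B.trace := by
    have h1 := congrArg Matrix.trace hBHH
    rwa [Matrix.trace_conjTranspose] at h1
  have hTrA : star A.trace = A.trace := by
    have h1 := congrArg Matrix.trace hAH.eq
    rwa [Matrix.trace_conjTranspose] at h1
  have hTrC : star C.trace = C.trace := by
    have h1 := congrArg Matrix.trace hCH.eq
    rwa [Matrix.trace_conjTranspose] at h1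
  -- Hermitian-ness of the two block matrices
  have hermTL : (A.trace • (1 : Matrix (Fin n) (Fin n) ℂ) + C).IsHermitian := by
    have : (A.trace • (1 : Matrix (Fin n) (Fin n) ℂ) + C)ᴴ
        = A.trace • (1 : Matrix (Fin n) (Fin n) ℂ) + C := by
      rw [Matrix.conjTranspose_add, Matrix.conjTranspose_smul, Matrix.conjTranspose_one,
        hTrA, hCH.eq]
    exact this
  have hermBR : (C.trace • (1 : Matrix (Fin n) (Fin n) ℂ) + A).IsHermitian := by
    have : (C.trace • (1 : Matrix (Fin n) (Fin n) ℂ) + A)ᴴ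
        = C.trace • (1 : Matrix (Fin n) (Fin n) ℂ) + A := by
      rw [Matrix.conjTranspose_add, Matrix.conjTranspose_smul, Matrix.conjTranspose_one,
        hTrC, hAH.eq]
    exact this
  have hoff1 : (B.trace • (1 : Matrix (Fin n) (Fin n) ℂ) - B)ᴴ
      = Bᴴ.trace • (1 : Matrix (Fin n) (Fin n) ℂ) - Bᴴ := by
    rw [Matrix.conjTranspose_sub, Matrix.conjTranspose_smul, Matrix.conjTranspose_one, hTrB]
  have hoff2 : (Bᴴ.trace • (1 : Matrix (Fin n) (Fin n) ℂ) - Bᴴ)ᴴ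
      = B.trace • (1 : Matrix (Fin n) (Fin n) ℂ) - B := by
    rw [Matrix.conjTranspose_sub, Matrix.conjTranspose_smul, Matrix.conjTranspose_one,
      hTrBH, hBHH]
  have herm1 := Matrix.IsHermitian.fromBlocks hermTL hoff1 hermBR
  have herm2 := Matrix.IsHermitian.fromBlocks hermTL hoff2 hermBR
  -- quadratic form expansions
  have qC : ∀ x : Fin n → ℂ, star x ⬝ᵥ (C *ᵥ x) = ∑ r, inn x (q r) * inn (q r) x :=
    fun x => quad_rep C q q hC x x
  have qA : ∀ y : Fin n → ℂ, star y ⬝ᵥ (A *ᵥ y) = ∑ r, inn y (p r) * inn (p r) y :=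
    fun y => quad_rep A p p hA y y
  have qB : ∀ x y : Fin n → ℂ, star x ⬝ᵥ (B *ᵥ y) = ∑ r, inn x (p r) * inn (q r) y :=
    fun x y => quad_rep B p q hB x y
  have qBH : ∀ x y : Fin n → ℂ, star x ⬝ᵥ (Bᴴ *ᵥ y) = ∑ r, inn x (q r) * inn (p r) y :=
    fun x y => quad_rep Bᴴ q p hBH x y
  have expand1 : ∀ x y : Fin n → ℂ, ∀ c : ℂ, ∀ M : Matrix (Fin n) (Fin n) ℂ,
      star x ⬝ᵥ ((c • (1 : Matrix (Fin n) (Fin n) ℂ) + M) *ᵥ y)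
        = c * inn x y + star x ⬝ᵥ (M *ᵥ y) := by
    intro x y c M
    rw [Matrix.add_mulVec, dotProduct_add, Matrix.smul_mulVec, Matrix.one_mulVec,
      dotProduct_smul, smul_eq_mul, inn_eq_dot]
  have expand2 : ∀ x y : Fin n → ℂ, ∀ c : ℂ, ∀ M : Matrix (Fin n) (Fin n) ℂ,
      star x ⬝ᵥ ((c • (1 : Matrix (Fin n) (Fin n) ℂ) - M) *ᵥ y)
        = c * inn x y - star x ⬝ᵥ (M *ᵥ y) := by
    intro x y c M
    rw [Matrix.sub_mulVec, dotProduct_sub, Matrix.smul_mulVec, Matrix.one_mulVec,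
      dotProduct_smul, smul_eq_mul, inn_eq_dot]
  constructor
  · refine Matrix.posSemidef_iff_dotProduct_mulVec.mpr ⟨herm1, fun v => ?_⟩
    rw [← Sum.elim_comp_inl_inr v]
    set x : Fin n → ℂ := v ∘ Sum.inl
    set y : Fin n → ℂ := v ∘ Sum.inr
    rw [quad_blocks, expand1, expand2, expand2, expand1, qA, qB, qBH, qC,
      tA, tB, tBH, tC]
    have total : (∑ r, inn (p r) (p r)) * inn x x + ∑ r, inn x (q r) * inn (q r) x
        + ((∑ r, inn (q r) (p r)) * inn x y - ∑ r, inn x (p r) * inn (q r) y)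
        + (((∑ r, inn (p r) (q r)) * inn y x - ∑ r, inn y (q r) * inn (p r) x)
          + ((∑ r, inn (q r) (q r)) * inn y y + ∑ r, inn y (p r) * inn (p r) y))
        = ∑ r, fK (p r) (q r) x y := by
      simp only [Finset.sum_mul, ← Finset.sum_add_distrib, ← Finset.sum_sub_distrib]
      exact Finset.sum_congr rfl fun r _ => by rw [fK]; ring
    rw [total]
    exact Finset.sum_nonneg fun r _ => fK_nonneg (p r) (q r) x y
  · refine Matrix.posSemidef_iff_dotProduct_mulVec.mpr ⟨herm2, fun v => ?_⟩
    rw [← Sum.elim_comp_inl_inr v]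
    set x : Fin n → ℂ := v ∘ Sum.inl
    set y : Fin n → ℂ := v ∘ Sum.inr
    rw [quad_blocks, expand1, expand2, expand2, expand1, qA, qB, qBH, qC,
      tA, tB, tBH, tC]
    have total : (∑ r, inn (p r) (p r)) * inn x x + ∑ r, inn x (q r) * inn (q r) x
        + ((∑ r, inn (p r) (q r)) * inn x y - ∑ r, inn x (q r) * inn (p r) y)
        + (((∑ r, inn (q r) (p r)) * inn y x - ∑ r, inn y (p r) * inn (q r) x)
          + ((∑ r, inn (q r) (q r)) * inn y y + ∑ r, inn y (p r) * inn (p r) y))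
        = ∑ r, gK (p r) (q r) x y := by
      simp only [Finset.sum_mul, ← Finset.sum_add_distrib, ← Finset.sum_sub_distrib]
      exact Finset.sum_congr rfl fun r _ => by rw [gK]; ring
    rw [total]
    exact Finset.sum_nonneg fun r _ => gK_nonneg (p r) (q r) x y
end
end

section
/- Let M and N be n×m complex matrices. Then for every j with 1 ≤ j ≤ min(m, n), λ_j(M*M + N*N) ≤ λ_j(MM* + NN*) + (1/2)·tr(M*M + N*N − M*N − N*M), where λ_j denotes the j-th largest eigenvalue of a Hermitian matrix. (Note that tr(M*M + N*N − M*N − N*M) = tr((M−N)*(M−N)) is a nonnegative real number.) -/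
open Matrix
open scoped ComplexOrder

noncomputable section

/-- The entries of `x` sorted in non-increasing order: `sortedDesc x j` is the
`j`-th largest entry of `x`. -/
def sortedDesc {N : ℕ} (x : Fin N → ℝ) : Fin N → ℝ :=
  fun j => (x ∘ Tuple.sort x) j.rev

namespace CF

variable {d : ℕ} {A : Matrix (Fin d) (Fin d) ℂ}

def mu (hA : A.IsHermitian) : Fin d → ℝ := sortedDesc hA.eigenvalues

lemma mu_antitone (hA : A.IsHermitian) : Antitone (mu hA) := fun _ _ h =>
  Tuple.monotone_sort hA.eigenvalues (Fin.rev_le_rev.mpr h)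

def ub (hA : A.IsHermitian) : OrthonormalBasis (Fin d) ℂ (EuclideanSpace ℂ (Fin d)) :=
  hA.eigenvectorBasis.reindex (Fin.revPerm.trans (Tuple.sort hA.eigenvalues)).symm

lemma mulVec_ub (hA : A.IsHermitian) (k : Fin d) :
    A *ᵥ WithLp.equiv 2 (Fin d → ℂ) (ub hA k)
      = (mu hA k : ℂ) • WithLp.equiv 2 (Fin d → ℂ) (ub hA k) := by
  have := hA.mulVec_eigenvectorBasis ((Fin.revPerm.trans (Tuple.sort hA.eigenvalues)) k)
  simp only [ub, OrthonormalBasis.reindex_apply, Equiv.symm_symm]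
  convert this using 2 <;> (norm_num [mu, sortedDesc]; try rfl)

lemma vecMul_of_mulVec (hA : A.IsHermitian) {v : Fin d → ℂ} {t : ℂ}
    (hv : A *ᵥ v = t • v) : star v ᵥ* A = star (t • v) := by
  rw [← hA.eq, ← Matrix.star_mulVec, hv]

def Ray (A : Matrix (Fin d) (Fin d) ℂ) (x : EuclideanSpace ℂ (Fin d)) : ℝ :=
  (inner (𝕜 := ℂ) x (Matrix.toEuclideanLin A x)).re

lemma conj_mul_re (t : ℝ) (c : ℂ) :
    ((starRingEnd ℂ) c * ((t : ℂ) * c)).re = t * ‖c‖ ^ 2 := by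
  have h3 : (starRingEnd ℂ) c * ((t : ℂ) * c) = ((t * ‖c‖ ^ 2 : ℝ) : ℂ) := by
    rw [mul_comm ((starRingEnd ℂ) c), mul_assoc, Complex.mul_conj]
    rw [Complex.sq_norm, Complex.ofReal_mul]
  rw [h3, Complex.ofReal_re]

lemma inner_ub_toEuclideanLin (hA : A.IsHermitian) (k : Fin d) (x : EuclideanSpace ℂ (Fin d)) :
    inner (𝕜 := ℂ) (ub hA k) (Matrix.toEuclideanLin A x)
      = (mu hA k : ℂ) * inner (𝕜 := ℂ) (ub hA k) x := by
  rw [EuclideanSpace.inner_eq_star_dotProduct, EuclideanSpace.inner_eq_star_dotProduct,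
    dotProduct_comm, dotProduct_comm x.ofLp]
  have hv := vecMul_of_mulVec hA (mulVec_ub hA k)
  simp only [WithLp.equiv_apply] at hv
  rw [ofLp_toEuclideanLin_apply, Matrix.dotProduct_mulVec,
    hv, star_smul, smul_dotProduct]
  simp [smul_eq_mul]

lemma ray_eq_sum (hA : A.IsHermitian) (x : EuclideanSpace ℂ (Fin d)) :
    Ray A x = ∑ k, mu hA k * ‖(ub hA).repr x k‖ ^ 2 := by
  set b := ub hA with hb
  have h1 : inner (𝕜 := ℂ) x (Matrix.toEuclideanLin A x)
      = ∑ k, (starRingEnd ℂ) (b.repr x k) * inner (𝕜 := ℂ) (b k) (Matrix.toEuclideanLin A x) := by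
    have h2 := congrArg (fun z : EuclideanSpace ℂ (Fin d) =>
      inner (𝕜 := ℂ) z (Matrix.toEuclideanLin A x)) (b.sum_repr x)
    simp only at h2
    rw [← h2, sum_inner]
    simp [inner_smul_left]
  rw [Ray, h1, Finset.sum_congr rfl (fun k _ => by rw [inner_ub_toEuclideanLin hA k x]),
    Complex.re_sum]
  refine Finset.sum_congr rfl fun k _ => ?_
  rw [← b.repr_apply_apply x k, conj_mul_re]

lemma norm_sq_eq_sum (hA : A.IsHermitian) (x : EuclideanSpace ℂ (Fin d)) :
    ‖x‖ ^ 2 = ∑ k, ‖(ub hA).repr x k‖ ^ 2 := by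
  rw [← (ub hA).repr.norm_map x, EuclideanSpace.norm_eq, Real.sq_sqrt (by positivity)]


lemma repr_eq_zero_of_mem_span (hA : A.IsHermitian) {ι : Type*} (f : ι → Fin d)
    {x : EuclideanSpace ℂ (Fin d)}
    (hx : x ∈ Submodule.span ℂ (Set.range (⇑(ub hA) ∘ f)))
    {k : Fin d} (hk : ∀ i, f i ≠ k) : (ub hA).repr x k = 0 := by
  set b := ub hA
  induction hx using Submodule.span_induction with
  | mem y hy =>
    obtain ⟨i, rfl⟩ := hy
    have h1 : b.repr ((⇑b ∘ f) i) = EuclideanSpace.single (f i) (1 : ℂ) := b.repr_self (f i)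
    rw [h1, EuclideanSpace.single_apply, if_neg (fun h => hk i h.symm)]
  | zero => simp
  | add y z _ _ hy hz => rw [map_add]; simp only [PiLp.add_apply, hy, hz, add_zero]
  | smul a y _ hy => rw [_root_.map_smul]; simp only [PiLp.smul_apply, hy, smul_zero]

lemma finrank_span_ub (hA : A.IsHermitian) {s : ℕ} (f : Fin s → Fin d) (hf : Function.Injective f) :
    Module.finrank ℂ (Submodule.span ℂ (Set.range (⇑(ub hA) ∘ f))) = s := by
  rw [finrank_span_eq_card (((ub hA).orthonormal.comp f hf).linearIndependent), Fintype.card_fin]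

/-- the tail subspace: Rayleigh ≤ μ_j there, and finrank = d - j. -/
lemma exists_tail (hA : A.IsHermitian) (j : Fin d) :
    ∃ V : Submodule ℂ (EuclideanSpace ℂ (Fin d)), Module.finrank ℂ V = d - j ∧
      ∀ x ∈ V, Ray A x ≤ mu hA j * ‖x‖ ^ 2 := by
  have hlt : ∀ i : Fin (d - j), (j : ℕ) + i < d := fun i => by omega
  set f : Fin (d - j) → Fin d := fun i => ⟨j + i, hlt i⟩ with hf
  have hinj : Function.Injective f := by
    intro a b h
    simpa [hf, Fin.ext_iff] using h
  refine ⟨Submodule.span ℂ (Set.range (⇑(ub hA) ∘ f)), finrank_span_ub hA f hinj, ?_⟩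
  intro x hx
  rw [ray_eq_sum hA, norm_sq_eq_sum hA, Finset.mul_sum]
  refine Finset.sum_le_sum fun k _ => ?_
  by_cases hjk : j ≤ k
  · have := mu_antitone hA hjk
    nlinarith [sq_nonneg ‖(ub hA).repr x k‖]
  · have : (ub hA).repr x k = 0 := by
      refine repr_eq_zero_of_mem_span hA f hx fun i hik => hjk ?_
      rw [← hik]
      exact Fin.mk_le_mk.mpr (Nat.le_add_right _ _)
    simp [this]

/-- the head subspace: Rayleigh ≥ μ_j there, and finrank = j + 1. -/
lemma exists_head (hA : A.IsHermitian) (j : Fin d) :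
    ∃ V : Submodule ℂ (EuclideanSpace ℂ (Fin d)), Module.finrank ℂ V = (j : ℕ) + 1 ∧
      ∀ x ∈ V, mu hA j * ‖x‖ ^ 2 ≤ Ray A x := by
  have hlt : ∀ i : Fin ((j : ℕ) + 1), (i : ℕ) < d := fun i => by
    have := i.2; have := j.2; omega
  set f : Fin ((j : ℕ) + 1) → Fin d := fun i => ⟨i, hlt i⟩ with hf
  have hinj : Function.Injective f := by
    intro a b h
    simpa [hf, Fin.ext_iff] using h
  refine ⟨Submodule.span ℂ (Set.range (⇑(ub hA) ∘ f)), finrank_span_ub hA f hinj, ?_⟩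
  intro x hx
  rw [ray_eq_sum hA, norm_sq_eq_sum hA, Finset.mul_sum]
  refine Finset.sum_le_sum fun k _ => ?_
  by_cases hjk : k ≤ j
  · have := mu_antitone hA hjk
    nlinarith [sq_nonneg ‖(ub hA).repr x k‖]
  · have : (ub hA).repr x k = 0 := by
      refine repr_eq_zero_of_mem_span hA f hx fun i hik => hjk ?_
      rw [← hik]
      exact Fin.mk_le_mk.mpr (by have := i.2; omega)
    simp [this]

lemma ray_le_top (hA : A.IsHermitian) (hd : 0 < d) (x : EuclideanSpace ℂ (Fin d)) :
    Ray A x ≤ mu hA ⟨0, hd⟩ * ‖x‖ ^ 2 := by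
  rw [ray_eq_sum hA, norm_sq_eq_sum hA, Finset.mul_sum]
  refine Finset.sum_le_sum fun k _ => ?_
  have := mu_antitone hA (show (⟨0, hd⟩ : Fin d) ≤ k from Fin.mk_le_mk.mpr (Nat.zero_le _))
  nlinarith [sq_nonneg ‖(ub hA).repr x k‖]

lemma exists_ne_zero_mem_inf {V W : Submodule ℂ (EuclideanSpace ℂ (Fin d))}
    (h : d < Module.finrank ℂ V + Module.finrank ℂ W) :
    ∃ x, x ∈ V ∧ x ∈ W ∧ x ≠ 0 := by
  have h1 := Submodule.finrank_sup_add_finrank_inf_eq V W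
  have h2 : Module.finrank ℂ (V ⊔ W : Submodule ℂ (EuclideanSpace ℂ (Fin d))) ≤ d := by
    simpa [finrank_euclideanSpace_fin] using
      Submodule.finrank_le (V ⊔ W : Submodule ℂ (EuclideanSpace ℂ (Fin d)))
  have h3 : (V ⊓ W : Submodule ℂ (EuclideanSpace ℂ (Fin d))) ≠ ⊥ := by
    intro hbot
    rw [hbot, finrank_bot] at h1
    omega
  obtain ⟨x, hx, hx0⟩ := Submodule.exists_mem_ne_zero_of_ne_bot h3
  exact ⟨x, hx.1, hx.2, hx0⟩

/-- Courant–Fischer, upper bound direction. -/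
lemma cf_upper (hA : A.IsHermitian) (j : Fin d) {c : ℝ}
    {V : Submodule ℂ (EuclideanSpace ℂ (Fin d))} (hdim : d - (j : ℕ) ≤ Module.finrank ℂ V)
    (hV : ∀ x ∈ V, Ray A x ≤ c * ‖x‖ ^ 2) : mu hA j ≤ c := by
  obtain ⟨W, hW1, hW2⟩ := exists_head hA j
  obtain ⟨x, hxV, hxW, hx0⟩ := exists_ne_zero_mem_inf (V := V) (W := W)
    (by rw [hW1]; have := j.2; omega)
  have h1 := hW2 x hxW
  have h2 := hV x hxV
  have h3 : (0:ℝ) < ‖x‖ ^ 2 := pow_pos (norm_pos_iff.mpr hx0) 2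
  nlinarith

/-- Courant–Fischer, lower bound direction. -/
lemma cf_lower (hA : A.IsHermitian) (j : Fin d) {c : ℝ}
    {V : Submodule ℂ (EuclideanSpace ℂ (Fin d))} (hdim : (j : ℕ) + 1 ≤ Module.finrank ℂ V)
    (hV : ∀ x ∈ V, c * ‖x‖ ^ 2 ≤ Ray A x) : c ≤ mu hA j := by
  obtain ⟨W, hW1, hW2⟩ := exists_tail hA j
  obtain ⟨x, hxV, hxW, hx0⟩ := exists_ne_zero_mem_inf (V := V) (W := W)
    (by rw [hW1]; have := j.2; omega)
  have h1 := hW2 x hxW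
  have h2 := hV x hxV
  have h3 : (0:ℝ) < ‖x‖ ^ 2 := pow_pos (norm_pos_iff.mpr hx0) 2
  nlinarith

lemma ray_nonneg {P : Matrix (Fin d) (Fin d) ℂ} (hP : P.PosSemidef)
    (x : EuclideanSpace ℂ (Fin d)) : 0 ≤ Ray P x := by
  have h := hP.dotProduct_mulVec_nonneg (WithLp.equiv 2 (Fin d → ℂ) x)
  rw [Ray, EuclideanSpace.inner_eq_star_dotProduct, ofLp_toEuclideanLin_apply, dotProduct_comm]
  exact (Complex.le_def.mp h).1

lemma mu_nonneg {P : Matrix (Fin d) (Fin d) ℂ} (hP : P.PosSemidef) (k : Fin d) :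
    0 ≤ mu hP.isHermitian k :=
  hP.eigenvalues_nonneg _

lemma trace_re_eq_sum_mu (hA : A.IsHermitian) : (Matrix.trace A).re = ∑ k, mu hA k := by
  have h0 : Matrix.trace A = ∑ i, (hA.eigenvalues i : ℂ) := by
    conv_lhs => rw [hA.spectral_theorem]
    rw [Unitary.conjStarAlgAut_apply, Matrix.trace_mul_comm, ← mul_assoc, Matrix.mem_unitaryGroup_iff'.mp
      (hA.eigenvectorUnitary).2, one_mul, Matrix.trace_diagonal]
    rfl
  have h1 : ∑ k, mu hA k = ∑ i, hA.eigenvalues i :=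
    Equiv.sum_comp (Fin.revPerm.trans (Tuple.sort hA.eigenvalues)) hA.eigenvalues
  rw [h0, h1, Complex.re_sum]
  simp

lemma mu_zero_le_trace_re {P : Matrix (Fin d) (Fin d) ℂ} (hP : P.PosSemidef) (hd : 0 < d) :
    mu hP.isHermitian ⟨0, hd⟩ ≤ (Matrix.trace P).re := by
  rw [trace_re_eq_sum_mu hP.isHermitian]
  exact Finset.single_le_sum (f := mu hP.isHermitian) (fun k _ => mu_nonneg hP k)
    (Finset.mem_univ _)

lemma ray_add (A B : Matrix (Fin d) (Fin d) ℂ) (x : EuclideanSpace ℂ (Fin d)) :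
    Ray (A + B) x = Ray A x + Ray B x := by
  rw [Ray, Ray, Ray, map_add, LinearMap.add_apply, inner_add_right, Complex.add_re]

/-- Key lemma: `μ_j(PᴴP) ≤ μ_j(PPᴴ)` for `j < min(m,n)`. -/
lemma mu_conjTranspose_mul_le {n m : ℕ} (P : Matrix (Fin n) (Fin m) ℂ) (j : ℕ)
    (hjm : j < m) (hjn : j < n) :
    mu (posSemidef_conjTranspose_mul_self P).isHermitian ⟨j, hjm⟩
      ≤ mu (posSemidef_self_mul_conjTranspose P).isHermitian ⟨j, hjn⟩ := by
  set hA := (posSemidef_conjTranspose_mul_self P).isHermitian with hhA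
  set hB := (posSemidef_self_mul_conjTranspose P).isHermitian with hhB
  by_cases hpos : 0 < mu hA ⟨j, hjm⟩
  swap
  · exact le_trans (not_lt.mp hpos) (mu_nonneg (posSemidef_self_mul_conjTranspose P) _)
  · have hglt : ∀ i : Fin (j + 1), (i : ℕ) < m := fun i => by have := i.2; omega
    set g : Fin (j + 1) → Fin m := fun i => ⟨i, hglt i⟩ with hg
    have hgle : ∀ i, g i ≤ (⟨j, hjm⟩ : Fin m) := fun i => Fin.mk_le_mk.mpr (by have := i.2; omega)
    have hμpos : ∀ i, 0 < mu hA (g i) := fun i => lt_of_lt_of_le hpos (mu_antitone hA (hgle i))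
    set u : Fin (j + 1) → (Fin m → ℂ) := fun i => WithLp.equiv 2 (Fin m → ℂ) (ub hA (g i)) with hu
    set w : Fin (j + 1) → (Fin n → ℂ) := fun i => P *ᵥ u i with hw
    set s : Fin (j + 1) → ℝ := fun i => (Real.sqrt (mu hA (g i)))⁻¹ with hs
    set e : Fin (j + 1) → EuclideanSpace ℂ (Fin n) :=
      fun i => (WithLp.equiv 2 (Fin n → ℂ)).symm ((s i : ℂ) • w i) with he
    -- dot products of the w's
    have hwdot : ∀ i l, star (w i) ⬝ᵥ w l
        = (mu hA (g l) : ℂ) * (if g i = g l then 1 else 0) := by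
      intro i l
      rw [hw]
      simp only
      rw [Matrix.star_mulVec, ← Matrix.dotProduct_mulVec, Matrix.mulVec_mulVec,
        mulVec_ub hA (g l), dotProduct_smul]
      have : star (u i) ⬝ᵥ u l = inner (𝕜 := ℂ) (ub hA (g i)) (ub hA (g l)) := by
        rw [EuclideanSpace.inner_eq_star_dotProduct, dotProduct_comm]; rfl
      rw [smul_eq_mul, this, orthonormal_iff_ite.mp (ub hA).orthonormal]
    have hginj : Function.Injective g := fun a b hab => by
      simpa [hg, Fin.ext_iff] using hab
    -- orthonormality of e
    have honb : Orthonormal ℂ e := by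
      rw [orthonormal_iff_ite]
      intro i l
      rw [he]
      simp only
      rw [WithLp.equiv_symm_apply, EuclideanSpace.inner_toLp_toLp, dotProduct_comm, star_smul,
        smul_dotProduct, dotProduct_smul, hwdot i l]
      by_cases hil : i = l
      · subst hil
        rw [if_pos rfl, if_pos rfl]
        have h3 : Real.sqrt (mu hA (g i)) * Real.sqrt (mu hA (g i)) = mu hA (g i) :=
          Real.mul_self_sqrt (hμpos i).le
        have h4 : Real.sqrt (mu hA (g i)) ≠ 0 := ne_of_gt (Real.sqrt_pos.mpr (hμpos i))
        simp only [smul_eq_mul, mul_one, RCLike.star_def, Complex.conj_ofReal, hs]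
        norm_cast
        field_simp
        rw [sq, h3]
      · rw [if_neg hil, if_neg (fun hgg => hil (hginj hgg))]
        simp
    -- e i are eigenvectors of P * Pᴴ
    have heig : ∀ i, Matrix.toEuclideanLin (P * Pᴴ) (e i) = (mu hA (g i) : ℂ) • e i := by
      intro i
      rw [he]
      simp only
      rw [WithLp.equiv_symm_apply, toEuclideanLin_apply_piLp_toLp, Matrix.mulVec_smul, ← WithLp.toLp_smul]
      congr 1
      rw [smul_comm]
      congr 1
      rw [hw]
      simp only
      rw [← Matrix.mulVec_mulVec (P *ᵥ u i) P Pᴴ, Matrix.mulVec_mulVec (u i) Pᴴ P,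
        hu]
      simp only
      rw [mulVec_ub hA (g i), Matrix.mulVec_smul]
    -- the subspace spanned by the e's
    have hdim : (j : ℕ) + 1 ≤ Module.finrank ℂ (Submodule.span ℂ (Set.range e)) := by
      rw [finrank_span_eq_card honb.linearIndependent, Fintype.card_fin]
    refine cf_lower hB ⟨j, hjn⟩ hdim ?_
    intro x hx
    rw [Submodule.mem_span_range_iff_exists_fun] at hx
    obtain ⟨a, ha⟩ := hx
    have hT : Matrix.toEuclideanLin (P * Pᴴ) (∑ i, a i • e i)
        = ∑ i, (a i * (mu hA (g i) : ℂ)) • e i := by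
      rw [map_sum]
      refine Finset.sum_congr rfl fun i _ => ?_
      rw [_root_.map_smul, heig i, smul_smul]
    have hinner : inner (𝕜 := ℂ) (∑ i, a i • e i)
        (Matrix.toEuclideanLin (P * Pᴴ) (∑ i, a i • e i))
        = ∑ i, (starRingEnd ℂ) (a i) * (a i * (mu hA (g i) : ℂ)) := by
      rw [hT, honb.inner_sum]
    have hray : Ray (P * Pᴴ) x = ∑ i, mu hA (g i) * ‖a i‖ ^ 2 := by
      rw [Ray, ← ha, hinner, Complex.re_sum]
      refine Finset.sum_congr rfl fun i _ => ?_
      rw [show (starRingEnd ℂ) (a i) * (a i * (mu hA (g i) : ℂ))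
        = (starRingEnd ℂ) (a i) * ((mu hA (g i) : ℂ) * a i) by ring]
      exact conj_mul_re _ _
    have hnorm : ‖x‖ ^ 2 = ∑ i, ‖a i‖ ^ 2 := by
      have h5 : inner (𝕜 := ℂ) (∑ i, a i • e i) (∑ i, a i • e i)
          = ∑ i, (starRingEnd ℂ) (a i) * a i := honb.inner_sum a a Finset.univ
      have h6 : inner (𝕜 := ℂ) x x = ∑ i, (starRingEnd ℂ) (a i) * a i := by
        rw [← ha, h5]
      have h7 := congrArg Complex.re h6
      rw [Complex.re_sum] at h7
      rw [show (inner (𝕜 := ℂ) x x).re = ‖x‖ ^ 2 from inner_self_eq_norm_sq (𝕜 := ℂ) x] at h7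
      rw [h7]
      refine Finset.sum_congr rfl fun i _ => ?_
      have h8 := conj_mul_re 1 (a i)
      rw [Complex.ofReal_one, one_mul, one_mul] at h8
      exact h8
    rw [hray, hnorm, Finset.mul_sum]
    refine Finset.sum_le_sum fun i _ => ?_
    have := mu_antitone hA (hgle i)
    nlinarith [sq_nonneg ‖a i‖]

lemma ray_two (A B : Matrix (Fin d) (Fin d) ℂ) (h : A = B + B)
    (x : EuclideanSpace ℂ (Fin d)) : Ray A x = Ray B x + Ray B x := by
  rw [h, ray_add]

end CF

open CF

/-- For `n × m` complex matrices `M`, `N` and `1 ≤ j ≤ min(m, n)` (here `j` is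
zero-indexed): `λ_j(M*M + N*N) ≤ λ_j(MM* + NN*) + (1/2)tr(M*M + N*N − M*N − N*M)`,
where `λ_j` is the `j`-th largest eigenvalue. -/
theorem stmt19 {m n : ℕ} (M N : Matrix (Fin n) (Fin m) ℂ) (j : ℕ)
    (hjm : j < m) (hjn : j < n) :
    sortedDesc
        ((Matrix.posSemidef_conjTranspose_mul_self M).add
          (Matrix.posSemidef_conjTranspose_mul_self N)).isHermitian.eigenvalues
        ⟨j, hjm⟩
      ≤ sortedDesc
          ((Matrix.posSemidef_self_mul_conjTranspose M).add
            (Matrix.posSemidef_self_mul_conjTranspose N)).isHermitian.eigenvalues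
          ⟨j, hjn⟩
        + (1 / 2) * (Matrix.trace (Mᴴ * M + Nᴴ * N - Mᴴ * N - Nᴴ * M)).re := by
  set S := M + N with hS
  set D := M - N with hD
  set hA := ((Matrix.posSemidef_conjTranspose_mul_self M).add
    (Matrix.posSemidef_conjTranspose_mul_self N)).isHermitian with hhA
  set hB := ((Matrix.posSemidef_self_mul_conjTranspose M).add
    (Matrix.posSemidef_self_mul_conjTranspose N)).isHermitian with hhB
  have hSpsd : (Sᴴ * S).PosSemidef := Matrix.posSemidef_conjTranspose_mul_self S
  have hDpsd : (Dᴴ * D).PosSemidef := Matrix.posSemidef_conjTranspose_mul_self D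
  have hSpsd' : (S * Sᴴ).PosSemidef := Matrix.posSemidef_self_mul_conjTranspose S
  have hDpsd' : (D * Dᴴ).PosSemidef := Matrix.posSemidef_self_mul_conjTranspose D
  set t : ℝ := (Matrix.trace (Dᴴ * D)).re with ht
  have hm0 : 0 < m := lt_of_le_of_lt (Nat.zero_le j) hjm
  -- global Rayleigh bound for Dᴴ * D
  have hDray : ∀ x : EuclideanSpace ℂ (Fin m), Ray (Dᴴ * D) x ≤ t * ‖x‖ ^ 2 := by
    intro x
    refine le_trans (ray_le_top hDpsd.isHermitian hm0 x) ?_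
    have h1 : mu hDpsd.isHermitian ⟨0, hm0⟩ ≤ t := mu_zero_le_trace_re hDpsd hm0
    nlinarith [sq_nonneg ‖x‖]
  -- matrix identities
  have hid1 : Sᴴ * S + Dᴴ * D = (Mᴴ * M + Nᴴ * N) + (Mᴴ * M + Nᴴ * N) := by
    rw [hS, hD]
    simp only [conjTranspose_add, conjTranspose_sub, Matrix.add_mul, Matrix.mul_add,
      Matrix.sub_mul, Matrix.mul_sub]
    abel
  have hid2 : S * Sᴴ + D * Dᴴ = (M * Mᴴ + N * Nᴴ) + (M * Mᴴ + N * Nᴴ) := by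
    rw [hS, hD]
    simp only [conjTranspose_add, conjTranspose_sub, Matrix.add_mul, Matrix.mul_add,
      Matrix.sub_mul, Matrix.mul_sub]
    abel
  -- Step 1
  have step1 : mu hA ⟨j, hjm⟩ ≤ (mu hSpsd.isHermitian ⟨j, hjm⟩ + t) / 2 := by
    obtain ⟨V, hV1, hV2⟩ := exists_tail hSpsd.isHermitian ⟨j, hjm⟩
    refine cf_upper hA ⟨j, hjm⟩ (le_of_eq hV1.symm) ?_
    intro x hx
    have h2 : Ray (Mᴴ * M + Nᴴ * N) x + Ray (Mᴴ * M + Nᴴ * N) x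
        = Ray (Sᴴ * S) x + Ray (Dᴴ * D) x := by
      rw [← ray_add, ← ray_add, hid1]
    have h3 := hV2 x hx
    have h4 := hDray x
    linarith
  -- Step 2
  have step2 : mu hSpsd.isHermitian ⟨j, hjm⟩ ≤ mu hSpsd'.isHermitian ⟨j, hjn⟩ :=
    mu_conjTranspose_mul_le S j hjm hjn
  -- Step 3
  have step3 : mu hSpsd'.isHermitian ⟨j, hjn⟩ ≤ 2 * mu hB ⟨j, hjn⟩ := by
    obtain ⟨W, hW1, hW2⟩ := exists_tail hB ⟨j, hjn⟩
    refine cf_upper hSpsd'.isHermitian ⟨j, hjn⟩ (le_of_eq hW1.symm) ?_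
    intro x hx
    have h2 : Ray (M * Mᴴ + N * Nᴴ) x + Ray (M * Mᴴ + N * Nᴴ) x
        = Ray (S * Sᴴ) x + Ray (D * Dᴴ) x := by
      rw [← ray_add, ← ray_add, hid2]
    have h3 := hW2 x hx
    have h4 := ray_nonneg hDpsd' x
    linarith
  -- trace identity
  have htr : Dᴴ * D = Mᴴ * M + Nᴴ * N - Mᴴ * N - Nᴴ * M := by
    rw [hD]
    simp only [conjTranspose_sub, Matrix.sub_mul, Matrix.mul_sub]
    abel
  show mu hA ⟨j, hjm⟩ ≤ mu hB ⟨j, hjn⟩ + 1 / 2 * (Matrix.trace (Mᴴ * M + Nᴴ * N - Mᴴ * N - Nᴴ * M)).re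
  rw [← htr, ← ht]
  linarith
end
end
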